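/- arXiv:1909.02418 — 5 statements merged into one kernel-verified Lean document; each statement's English description precedes it below -/
import Mathlib

section
/- Let 𝒞 be a conic in the real projective plane, given as the zero locus of a nondegenerate quadratic form on ℝ³. Let A, B, C and A', B', C' be two triangles inscribed in 𝒞 (all six points on 𝒞, A, B, C not collinear, A', B', C' not collinear, and the six points pairwise distinct). Suppose ABC is perspective with A'B'C' with perspector P (the lines AA', BB', CC' all pass through P) and ABC is perspective with B'C'A' with perspector Q (the lines AB', BC', CA' all pass through Q), with P ≠ Q. Then there exists a point R on the line PQ such that ABC is perspective with C'A'B' with perspector R (the lines AC', BA', CB' all pass through R). -/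
/-- Three points of the real projective plane are collinear if (some, equivalently any)
homogeneous representatives of them are linearly dependent. -/
def Collin (X Y Z : Projectivization ℝ (Fin 3 → ℝ)) : Prop :=
  ¬ LinearIndependent ℝ ![X.rep, Y.rep, Z.rep]

/-- A point of the real projective plane lies on the conic cut out by the quadratic form `q`. -/
def OnConic (q : QuadraticForm ℝ (Fin 3 → ℝ)) (X : Projectivization ℝ (Fin 3 → ℝ)) : Prop :=
  q X.rep = 0

/-!
Take homogeneous coordinates in which `A, B, C` are the coordinate points, scaled by the polar
values `⟪B, C⟫, ⟪A, C⟫, ⟪A, B⟫` (nonzero because the form is nondegenerate); then the conic is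
`xy + yz + zx = 0`. In the chart `x = 1` write `A' = (1, Y₁, Z₁)`, `B' = (1, Y₂, Z₂)`,
`C' = (1, Y₃, Z₃)`, points of the hyperbola `Y + Z + YZ = 0`. A perspector of `ABC` and `A'B'C'`
must be `P = (1, Y₃, Z₂)`, and it exists iff `Y₁Z₂ = Y₃Z₁`; likewise `Q = (1, Y₁, Z₃)` with
`Y₂Z₃ = Y₁Z₂`. These two relations give the third one, `Y₃Z₁ = Y₂Z₃`, so `AC'`, `BA'`, `CB'` meet
at `R = (1, Y₂, Z₁)`. Collinearity of `P, Q, R` says `∑ YᵢZᵢ = ∑ YᵢZᵢ₊₁`. On the hyperbola the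
common value of the cyclic products `YᵢZᵢ₊₁` is forced to be `1`, whence `Zᵢ = -(1 + Yᵢ₊₁)` and
both sums agree.
-/

open Projectivization

local notation "ℙ²" => Projectivization ℝ (Fin 3 → ℝ)

def HasCoords (b : Module.Basis (Fin 3) ℝ (Fin 3 → ℝ)) (X : ℙ²) (x : Fin 3 → ℝ) : Prop :=
  ∃ c : ℝ, c ≠ 0 ∧ b.equivFun X.rep = c • x

namespace HasCoords

variable {b : Module.Basis (Fin 3) ℝ (Fin 3 → ℝ)} {X Y : ℙ²} {x : Fin 3 → ℝ}

lemma rep (b : Module.Basis (Fin 3) ℝ (Fin 3 → ℝ)) (X : ℙ²) : HasCoords b X (b.equivFun X.rep) :=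
  ⟨1, one_ne_zero, (one_smul ℝ _).symm⟩

lemma of_rep_eq_smul {c : ℝ} (hc : c ≠ 0) (h : X.rep = c • b.equivFun.symm x) :
    HasCoords b X x :=
  ⟨c, hc, by rw [h, map_smul, LinearEquiv.apply_symm_apply]⟩

lemma ne_zero (h : HasCoords b X x) : x ≠ 0 := by
  obtain ⟨c, -, hc⟩ := h
  rintro rfl
  rw [smul_zero, LinearEquiv.map_eq_zero_iff] at hc
  exact X.rep_nonzero hc

lemma of_smul {c : ℝ} (h : HasCoords b X (c • x)) : HasCoords b X x := by
  have hc : c ≠ 0 := by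
    rintro rfl
    exact h.ne_zero (zero_smul ℝ x)
  obtain ⟨d, hd, hdc⟩ := h
  exact ⟨d * c, mul_ne_zero hd hc, by rw [hdc, smul_smul]⟩

lemma eq (hX : HasCoords b X x) (hY : HasCoords b Y x) : X = Y := by
  obtain ⟨c, -, hcx⟩ := hX
  obtain ⟨d, hd, hdx⟩ := hY
  rw [← X.mk_rep, ← Y.mk_rep, mk_eq_mk_iff']
  refine ⟨c / d, b.equivFun.injective ?_⟩
  rw [map_smul, hcx, hdx, smul_smul, div_mul_cancel₀ _ hd]

end HasCoords

lemma exists_hasCoords (b : Module.Basis (Fin 3) ℝ (Fin 3 → ℝ)) {x : Fin 3 → ℝ} (hx : x ≠ 0) :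
    ∃ X, HasCoords b X x := by
  have hv : b.equivFun.symm x ≠ 0 := (LinearEquiv.map_ne_zero_iff _).2 hx
  obtain ⟨a, ha⟩ := exists_smul_eq_mk_rep ℝ _ hv
  exact ⟨mk ℝ _ hv, .of_rep_eq_smul a.ne_zero ha.symm⟩

lemma collin_iff_det {b : Module.Basis (Fin 3) ℝ (Fin 3 → ℝ)} {X Y Z : ℙ²} {x y z : Fin 3 → ℝ}
    (hX : HasCoords b X x) (hY : HasCoords b Y y) (hZ : HasCoords b Z z) :
    Collin X Y Z ↔ (Matrix.of ![x, y, z]).det = 0 := by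
  obtain ⟨c, hc, hcx⟩ := hX
  obtain ⟨d, hd, hdy⟩ := hY
  obtain ⟨e, he, hez⟩ := hZ
  have hrows : ⇑b.equivFun.toLinearMap ∘ ![X.rep, Y.rep, Z.rep] = ![c • x, d • y, e • z] := by
    ext i : 1; fin_cases i <;> simp [hcx, hdy, hez]
  have hli : LinearIndependent ℝ ![X.rep, Y.rep, Z.rep] ↔
      IsUnit (Matrix.of ![c • x, d • y, e • z]) := by
    rw [← b.equivFun.toLinearMap.linearIndependent_iff b.equivFun.ker, hrows]
    exact Matrix.linearIndependent_rows_iff_isUnit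
  have hdet : (Matrix.of ![c • x, d • y, e • z]).det = c * d * e * (Matrix.of ![x, y, z]).det := by
    simp only [Matrix.det_fin_three, Matrix.of_apply, Matrix.cons_val, Matrix.cons_val_zero,
      Matrix.cons_val_one, Pi.smul_apply, smul_eq_mul]
    ring
  rw [Collin, hli, Matrix.isUnit_iff_isUnit_det, isUnit_iff_ne_zero, not_not, hdet]
  simp [hc, hd, he]

def IsPerspector (P A B C A' B' C' : ℙ²) : Prop :=
  Collin A A' P ∧ Collin B B' P ∧ Collin C C' P

lemma isPerspector_iff {b : Module.Basis (Fin 3) ℝ (Fin 3 → ℝ)} {A B C A' B' C' P : ℙ²}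
    {Y₁ Y₂ Y₃ Z₁ Z₂ Z₃ : ℝ} (hA : HasCoords b A ![1, 0, 0]) (hB : HasCoords b B ![0, 1, 0])
    (hC : HasCoords b C ![0, 0, 1]) (hA' : HasCoords b A' ![1, Y₁, Z₁])
    (hB' : HasCoords b B' ![1, Y₂, Z₂]) (hC' : HasCoords b C' ![1, Y₃, Z₃]) :
    IsPerspector P A B C A' B' C' ↔ Y₁ * Z₂ = Y₃ * Z₁ ∧ HasCoords b P ![1, Y₃, Z₂] := by
  constructor
  · intro h
    have hP := HasCoords.rep b P
    set p := b.equivFun P.rep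
    obtain ⟨hAP, hBP, hCP⟩ : Y₁ * p 2 = Z₁ * p 1 ∧ p 2 = Z₂ * p 0 ∧ p 1 = Y₃ * p 0 := by
      simpa [IsPerspector, collin_iff_det hA hA' hP, collin_iff_det hB hB' hP,
        collin_iff_det hC hC' hP, Matrix.det_fin_three, sub_eq_zero, neg_add_eq_zero] using h
    have hp : p = p 0 • ![1, Y₃, Z₂] := by
      ext i; fin_cases i <;> simp [hBP, hCP, mul_comm]
    have hp₀ : p 0 ≠ 0 := fun h₀ ↦ hP.ne_zero (by rw [hp, h₀, zero_smul])
    exact ⟨mul_left_cancel₀ hp₀ (by linear_combination hAP - Y₁ * hBP + Z₁ * hCP), p 0, hp₀, hp⟩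
  · rintro ⟨hk, hP⟩
    simpa [IsPerspector, collin_iff_det hA hA' hP, collin_iff_det hB hB' hP,
      collin_iff_det hC hC' hP, Matrix.det_fin_three, sub_eq_zero, mul_comm] using hk

open QuadraticMap in
theorem QuadraticMap.map_smul_add_smul_add_smul_of_isotropic {R M : Type*} [CommRing R]
    [AddCommGroup M] [Module R M] (Q : QuadraticForm R M) {a b c : M} (ha : Q a = 0)
    (hb : Q b = 0) (hc : Q c = 0) (x y z : R) :
    Q (x • a + y • b + z • c) =
      x * y * polar Q a b + x * z * polar Q a c + y * z * polar Q b c := by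
  rw [QuadraticMap.map_add Q, QuadraticMap.map_add Q, polar_add_left]
  simp only [QuadraticMap.map_smul, polar_smul_left, polar_smul_right, ha, hb, hc, smul_eq_mul]
  ring

structure ConicFrame (q : QuadraticForm ℝ (Fin 3 → ℝ)) (A B C : ℙ²) where
  basis : Module.Basis (Fin 3) ℝ (Fin 3 → ℝ)
  hasCoords_A : HasCoords basis A ![1, 0, 0]
  hasCoords_B : HasCoords basis B ![0, 1, 0]
  hasCoords_C : HasCoords basis C ![0, 0, 1]
  onConic_iff {X : ℙ²} {x : Fin 3 → ℝ} :
    HasCoords basis X x → (OnConic q X ↔ x 0 * x 1 + x 0 * x 2 + x 1 * x 2 = 0)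

open QuadraticMap in
lemma polar_mul_polar_mul_polar_ne_zero {q : QuadraticForm ℝ (Fin 3 → ℝ)}
    (hq : (polarBilin q).Nondegenerate) {a b c : Fin 3 → ℝ} (ha : q a = 0) (hb : q b = 0)
    (hc : q c = 0) (hli : LinearIndependent ℝ ![a, b, c]) :
    polar q b c * polar q a c * polar q a b ≠ 0 := by
  let e := basisOfLinearIndependentOfCardEqFinrank hli (by simp)
  have he : ⇑e = ![a, b, c] := coe_basisOfLinearIndependentOfCardEqFinrank hli _
  have hgram : (LinearMap.BilinForm.toMatrix e (polarBilin q)).det =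
      2 * (polar q b c * polar q a c * polar q a b) := by
    simp [Matrix.det_fin_three, he, polar_self, ha, hb, hc, polar_comm q b a, polar_comm q c a,
      polar_comm q c b]
    ring
  have hdet := (LinearMap.BilinForm.nondegenerate_iff_det_ne_zero e).1 hq
  rw [hgram] at hdet
  exact right_ne_zero_of_mul hdet

open QuadraticMap in
lemma exists_conicFrame {q : QuadraticForm ℝ (Fin 3 → ℝ)} (hq : (polarBilin q).Nondegenerate)
    {A B C : ℙ²} (hA : OnConic q A) (hB : OnConic q B) (hC : OnConic q C)
    (hABC : ¬ Collin A B C) : Nonempty (ConicFrame q A B C) := by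
  have hli : LinearIndependent ℝ ![A.rep, B.rep, C.rep] := not_not.1 hABC
  let b₀ := basisOfLinearIndependentOfCardEqFinrank hli (by simp)
  have hb₀ : ⇑b₀ = ![A.rep, B.rep, C.rep] := coe_basisOfLinearIndependentOfCardEqFinrank hli _
  set u := polar q B.rep C.rep
  set v := polar q A.rep C.rep
  set w := polar q A.rep B.rep
  have huvw : u * v * w ≠ 0 := polar_mul_polar_mul_polar_ne_zero hq hA hB hC hli
  have hu : u ≠ 0 := left_ne_zero_of_mul (left_ne_zero_of_mul huvw)
  have hv : v ≠ 0 := right_ne_zero_of_mul (left_ne_zero_of_mul huvw)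
  have hw : w ≠ 0 := right_ne_zero_of_mul huvw
  let b := b₀.isUnitSMul (w := ![u, v, w]) (fun i ↦ by fin_cases i <;> simp [hu, hv, hw])
  have hb : ∀ x, b.equivFun.symm x =
      (x 0 * u) • A.rep + (x 1 * v) • B.rep + (x 2 * w) • C.rep := by
    intro x
    simp [b, Fin.sum_univ_three, Module.Basis.isUnitSMul_apply, hb₀, mul_smul]
  refine ⟨b, .of_rep_eq_smul (inv_ne_zero hu) ?_, .of_rep_eq_smul (inv_ne_zero hv) ?_,
    .of_rep_eq_smul (inv_ne_zero hw) ?_, ?_⟩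
  · simp [hb, hu]
  · simp [hb, hv]
  · simp [hb, hw]
  rintro X x ⟨c, hc, hcx⟩
  have hX : X.rep = c • b.equivFun.symm x := by
    rw [← map_smul, ← hcx, LinearEquiv.symm_apply_apply]
  have hqX : q X.rep = c * c * (u * v * w) * (x 0 * x 1 + x 0 * x 2 + x 1 * x 2) := by
    rw [hX, QuadraticMap.map_smul, hb, map_smul_add_smul_add_smul_of_isotropic q hA hB hC,
      smul_eq_mul]
    ring
  rw [OnConic, hqX, mul_eq_zero, or_iff_right (mul_ne_zero (mul_self_ne_zero.2 hc) huvw)]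

lemma ConicFrame.exists_affine_coords {q : QuadraticForm ℝ (Fin 3 → ℝ)} {A B C X : ℙ²}
    (F : ConicFrame q A B C) (hX : OnConic q X) (hAX : A ≠ X) (hBX : B ≠ X) (hCX : C ≠ X) :
    ∃ Y Z : ℝ, HasCoords F.basis X ![1, Y, Z] ∧ Y + Z + Y * Z = 0 ∧ Y ≠ 0 := by
  have hx := HasCoords.rep F.basis X
  set x := F.basis.equivFun X.rep
  have hx₀ : x 0 ≠ 0 := by
    intro h₀
    have h₁₂ : x 1 * x 2 = 0 := by simpa [h₀] using (F.onConic_iff hx).1 hX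
    rcases mul_eq_zero.1 h₁₂ with h₁ | h₂
    · refine hCX (F.hasCoords_C.eq (HasCoords.of_smul (c := x 2) ?_))
      convert hx using 1
      ext i; fin_cases i <;> simp [h₀, h₁]
    · refine hBX (F.hasCoords_B.eq (HasCoords.of_smul (c := x 1) ?_))
      convert hx using 1
      ext i; fin_cases i <;> simp [h₀, h₂]
  have hXYZ : HasCoords F.basis X ![1, x 1 / x 0, x 2 / x 0] := by
    refine HasCoords.of_smul (c := x 0) ?_
    convert hx using 1
    ext i; fin_cases i <;> simp [hx₀, mul_div_cancel₀]
  have hc : x 1 / x 0 + x 2 / x 0 + x 1 / x 0 * (x 2 / x 0) = 0 := by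
    simpa using (F.onConic_iff hXYZ).1 hX
  refine ⟨_, _, hXYZ, hc, fun hY ↦ hAX (F.hasCoords_A.eq ?_)⟩
  rw [hY, zero_mul, add_zero, zero_add] at hc
  rwa [hY, hc] at hXYZ

lemma eq_of_add_add_mul_eq_zero {Y Z Z' : ℝ} (h : Y + Z + Y * Z = 0)
    (h' : Y + Z' + Y * Z' = 0) : Z = Z' := by
  have hY : Y + 1 ≠ 0 :=
    left_ne_zero_of_mul_eq_one (by linear_combination h : (Y + 1) * (Z + 1) = 1)
  have hZ : (Y + 1) * (Z - Z') = 0 := by linear_combination h - h'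
  exact sub_eq_zero.1 ((mul_eq_zero.1 hZ).resolve_left hY)

lemma cyclic_mul_eq_one {Y₁ Y₂ Y₃ Z₁ Z₂ Z₃ : ℝ}
    (hc₁ : Y₁ + Z₁ + Y₁ * Z₁ = 0) (hc₂ : Y₂ + Z₂ + Y₂ * Z₂ = 0) (hc₃ : Y₃ + Z₃ + Y₃ * Z₃ = 0)
    (hY₁ : Y₁ ≠ 0) (hY₂ : Y₂ ≠ 0) (hY₁₂ : Y₁ ≠ Y₂)
    (hk₁ : Y₁ * Z₂ = Y₃ * Z₁) (hk₂ : Y₂ * Z₃ = Y₁ * Z₂) :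
    Y₁ * Z₂ = 1 := by
  have h₁ : Y₁ * Y₂ + Y₁ * Z₂ * (1 + Y₂) = 0 := by linear_combination Y₁ * hc₂
  have h₂ : Y₂ * Y₃ + Y₁ * Z₂ * (1 + Y₃) = 0 := by linear_combination Y₂ * hc₃ - (1 + Y₃) * hk₂
  have h₃ : Y₃ * Y₁ + Y₁ * Z₂ * (1 + Y₁) = 0 := by linear_combination Y₃ * hc₁ + (1 + Y₁) * hk₁
  have hk : Y₁ * Z₂ ≠ 0 := by
    intro h₀
    rw [h₀, zero_mul, add_zero] at h₁
    exact mul_ne_zero hY₁ hY₂ h₁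
  -- `h₁, h₂, h₃` say that `Y ↦ -k / (Y + k)`, `k = Y₁ Z₂`, permutes `Y₁, Y₂, Y₃` cyclically;
  -- a Möbius map with a 3-cycle has order 3, which for this one means `k = 1`.
  have : Y₁ * Z₂ * (Y₁ * Z₂ - 1) * (Y₁ - Y₂) = 0 := by
    linear_combination (Y₂ + Y₁ * Z₂) * h₃ - Y₁ * h₂ - Y₁ * Z₂ * h₁
  rcases mul_eq_zero.1 this with h | h
  · exact sub_eq_zero.1 ((mul_eq_zero.1 h).resolve_left hk)
  · exact absurd (sub_eq_zero.1 h) hY₁₂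

lemma diag_sum_eq_cyclic_sum {Y₁ Y₂ Y₃ Z₁ Z₂ Z₃ : ℝ}
    (hc₁ : Y₁ + Z₁ + Y₁ * Z₁ = 0) (hc₂ : Y₂ + Z₂ + Y₂ * Z₂ = 0) (hc₃ : Y₃ + Z₃ + Y₃ * Z₃ = 0)
    (hY₁ : Y₁ ≠ 0) (hY₂ : Y₂ ≠ 0) (hY₃ : Y₃ ≠ 0) (hY₁₂ : Y₁ ≠ Y₂)
    (hk₁ : Y₁ * Z₂ = Y₃ * Z₁) (hk₂ : Y₂ * Z₃ = Y₁ * Z₂) :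
    Y₁ * Z₁ + Y₂ * Z₂ + Y₃ * Z₃ = Y₁ * Z₂ + Y₂ * Z₃ + Y₃ * Z₁ := by
  have hk := cyclic_mul_eq_one hc₁ hc₂ hc₃ hY₁ hY₂ hY₁₂ hk₁ hk₂
  have hZ₁ : Z₁ = -(1 + Y₂) := mul_left_cancel₀ hY₃ <| by
    linear_combination hk - hk₁ + Y₂ * hc₃ - (Y₃ + 1) * (hk₂ + hk)
  have hZ₂ : Z₂ = -(1 + Y₃) := mul_left_cancel₀ hY₁ <| by
    linear_combination hk + Y₃ * hc₁ - (Y₁ + 1) * (hk - hk₁)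
  have hZ₃ : Z₃ = -(1 + Y₁) := mul_left_cancel₀ hY₂ <| by
    linear_combination hk₂ + hk + Y₁ * hc₂ - (Y₂ + 1) * hk
  rw [hZ₁, hZ₂, hZ₃]
  ring

theorem doubly_perspective_implies_triply_perspective_general
    (q : QuadraticForm ℝ (Fin 3 → ℝ))
    (hq : LinearMap.BilinForm.Nondegenerate (QuadraticMap.polarBilin q))
    (A B C A' B' C' : Projectivization ℝ (Fin 3 → ℝ))
    (hA : OnConic q A) (hB : OnConic q B) (hC : OnConic q C)
    (hA' : OnConic q A') (hB' : OnConic q B') (hC' : OnConic q C')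
    (hABC : ¬ Collin A B C)
    (hdistinct : List.Pairwise (· ≠ ·) [A, B, C, A', B', C'])
    (P Q : Projectivization ℝ (Fin 3 → ℝ))
    (hP : Collin A A' P ∧ Collin B B' P ∧ Collin C C' P)
    (hQ : Collin A B' Q ∧ Collin B C' Q ∧ Collin C A' Q) :
    ∃ R : Projectivization ℝ (Fin 3 → ℝ),
      Collin P Q R ∧ Collin A C' R ∧ Collin B A' R ∧ Collin C B' R := by
  obtain ⟨F⟩ := exists_conicFrame hq hA hB hC hABC
  obtain ⟨⟨-, -, hAA', hAB', hAC'⟩, ⟨-, hBA', hBB', hBC'⟩, ⟨hCA', hCB', hCC'⟩, ⟨hA'B', -⟩, -⟩ := by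
    simpa using hdistinct
  obtain ⟨Y₁, Z₁, hA'F, hc₁, hY₁⟩ := F.exists_affine_coords hA' hAA' hBA' hCA'
  obtain ⟨Y₂, Z₂, hB'F, hc₂, hY₂⟩ := F.exists_affine_coords hB' hAB' hBB' hCB'
  obtain ⟨Y₃, Z₃, hC'F, hc₃, hY₃⟩ := F.exists_affine_coords hC' hAC' hBC' hCC'
  have hY₁₂ : Y₁ ≠ Y₂ := by
    rintro rfl
    exact hA'B' (hA'F.eq (eq_of_add_add_mul_eq_zero hc₁ hc₂ ▸ hB'F))
  obtain ⟨hk₁, hPF⟩ :=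
    (isPerspector_iff F.hasCoords_A F.hasCoords_B F.hasCoords_C hA'F hB'F hC'F).1 hP
  obtain ⟨hk₂, hQF⟩ :=
    (isPerspector_iff F.hasCoords_A F.hasCoords_B F.hasCoords_C hB'F hC'F hA'F).1 hQ
  obtain ⟨R, hRF⟩ := exists_hasCoords F.basis (x := ![1, Y₂, Z₁]) (by simp)
  refine ⟨R, (collin_iff_det hPF hQF hRF).2 ?_,
    (isPerspector_iff F.hasCoords_A F.hasCoords_B F.hasCoords_C hC'F hA'F hB'F).2
      ⟨hk₁.symm.trans hk₂.symm, hRF⟩⟩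
  have hsum := diag_sum_eq_cyclic_sum hc₁ hc₂ hc₃ hY₁ hY₂ hY₃ hY₁₂ hk₁ hk₂
  simp only [Matrix.det_fin_three, Matrix.of_apply, Matrix.cons_val, Matrix.cons_val_zero,
    Matrix.cons_val_one]
  linear_combination hsum

theorem doubly_perspective_implies_triply_perspective
    (q : QuadraticForm ℝ (Fin 3 → ℝ))
    (hq : LinearMap.BilinForm.Nondegenerate (QuadraticMap.polarBilin q))
    (A B C A' B' C' : Projectivization ℝ (Fin 3 → ℝ))
    (hA : OnConic q A) (hB : OnConic q B) (hC : OnConic q C)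
    (hA' : OnConic q A') (hB' : OnConic q B') (hC' : OnConic q C')
    (hABC : ¬ Collin A B C) (hA'B'C' : ¬ Collin A' B' C')
    (hdistinct : List.Pairwise (· ≠ ·) [A, B, C, A', B', C'])
    (P Q : Projectivization ℝ (Fin 3 → ℝ)) (hPQ : P ≠ Q)
    (hP : Collin A A' P ∧ Collin B B' P ∧ Collin C C' P)
    (hQ : Collin A B' Q ∧ Collin B C' Q ∧ Collin C A' Q) :
    ∃ R : Projectivization ℝ (Fin 3 → ℝ),
      Collin P Q R ∧ Collin A C' R ∧ Collin B A' R ∧ Collin C B' R :=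
  doubly_perspective_implies_triply_perspective_general q hq A B C A' B' C' hA hB hC hA' hB' hC'
    hABC hdistinct P Q hP hQ
end

section
/- Let 𝒞 be a conic in the real projective plane, given as the zero locus of a nondegenerate quadratic form Q on ℝ³, and let A, B, C be three noncollinear points on 𝒞. Let P be the intersection point of the tangent line to 𝒞 at A with the line BC, let Q' be the intersection point of the tangent line to 𝒞 at B with the line CA, and let R be the intersection point of the tangent line to 𝒞 at C with the line AB. Then P, Q', R are collinear (this line is the Hessian line of ABC with respect to 𝒞). -/
/-! Let `a, b, c` represent the vertices and let `β` be the polar form; `a, b, c` is a basis of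
isotropic vectors. If `β a b = 0`, then `β b c • a - β a c • b` is orthogonal to the whole basis,
hence zero, so `β a c = 0` as well and `a` itself is orthogonal to everything: thus `β a b`,
`β b c`, `β c a` are nonzero. Consequently the tangent at `A` meets `BC` in
`β a b • c - β a c • b`, and cyclically; by symmetry of `β` these three representatives of
`P`, `Q'`, `R` sum to zero. -/

open Module Submodule
open LinearMap (BilinForm)

section LinearAlgebra

variable {K V : Type*} [Field K] [AddCommGroup V] [Module K V]

theorem LinearIndependent.rotate_three {a b c : V} (h : LinearIndependent K ![a, b, c]) :
    LinearIndependent K ![b, c, a] := by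
  convert h.comp _ (finRotate 3).injective using 1
  ext i; fin_cases i <;> rfl

theorem mem_span_pair_of_not_linearIndependent {u v w : V}
    (huv : LinearIndependent K ![u, v]) (h : ¬ LinearIndependent K ![u, v, w]) :
    w ∈ span K {u, v} := by
  by_contra hw
  refine h (LinearIndependent.rotate_three ?_)
  exact linearIndependent_finCons.mpr ⟨huv, by rwa [Matrix.range_cons_cons_empty]⟩

end LinearAlgebra

namespace LinearMap.BilinForm

variable {K V : Type*} [Field K] [AddCommGroup V] [Module K V] {B : BilinForm K V}

theorem exists_smul_eq_of_apply_eq_zero {x u v w : V} (hxu : B x u ≠ 0)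
    (hw : w ∈ span K {u, v}) (hxw : B x w = 0) :
    ∃ α : K, α • (B x u • v - B x v • u) = w := by
  obtain ⟨s, t, rfl⟩ := mem_span_pair.mp hw
  have hs : s * B x u + t * B x v = 0 := by simpa using hxw
  refine ⟨t / B x u, ?_⟩
  have hs' : s = -(t * B x v) / B x u := by field_simp; linear_combination hs
  rw [hs']
  match_scalars <;> field_simp

theorem apply_ne_zero_of_isotropic (hB : B.SeparatingLeft) (hsymm : B.IsSymm)
    (hdim : finrank K V = 3) {a b c : V} (hind : LinearIndependent K ![a, b, c])
    (ha : B a a = 0) (hb : B b b = 0) : B a b ≠ 0 := by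
  have hspan := hind.span_eq_top_of_card_eq_finrank (by simp [hdim])
  have horth : ∀ x, B x a = 0 → B x b = 0 → B x c = 0 → x = 0 := by
    intro x h₀ h₁ h₂
    refine hB x fun n => ?_
    rw [LinearMap.ext_on_range hspan (f := B x) (g := 0) (by intro i; fin_cases i <;> simpa)]
    rfl
  intro hab
  have hba : B b a = 0 := by rwa [hsymm.eq]
  have hv : B b c • a - B a c • b = 0 := by
    apply horth
    · simp [ha, hba]
    · simp [hb, hab]
    · simp [hsymm.eq _ c, mul_comm]
  have hac : B a c = 0 := by
    have hab_ind := (linearIndependent_finCons.mp hind.rotate_three.rotate_three).1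
    have := LinearIndependent.pair_iff.mp hab_ind (B b c) (-B a c) (by rw [← hv]; module)
    exact neg_eq_zero.mp this.2
  exact hind.ne_zero 0 (horth a ha hab hac)

theorem exists_smul_eq_of_isotropic (hB : B.SeparatingLeft) (hsymm : B.IsSymm)
    (hdim : finrank K V = 3) {a b c w : V} (hind : LinearIndependent K ![a, b, c])
    (ha : B a a = 0) (hb : B b b = 0) (haw : B a w = 0) (hw : ¬ LinearIndependent K ![b, c, w]) :
    ∃ α : K, α • (B a b • c - B a c • b) = w :=
  exists_smul_eq_of_apply_eq_zero (apply_ne_zero_of_isotropic hB hsymm hdim hind ha hb)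
    (mem_span_pair_of_not_linearIndependent (linearIndependent_finCons.mp hind).1 hw) haw

end LinearMap.BilinForm

theorem collin_of_add_add_eq_zero {X Y Z : Projectivization ℝ (Fin 3 → ℝ)} {x y z : Fin 3 → ℝ}
    (hX : ∃ α : ℝ, α • x = X.rep) (hY : ∃ β : ℝ, β • y = Y.rep) (hZ : ∃ γ : ℝ, γ • z = Z.rep)
    (hsum : x + y + z = 0) : Collin X Y Z := by
  obtain ⟨α, hα⟩ := hX
  obtain ⟨β, hβ⟩ := hY
  obtain ⟨γ, hγ⟩ := hZ
  have hne {W : Projectivization ℝ (Fin 3 → ℝ)} {δ : ℝ} {v : Fin 3 → ℝ} (h : δ • v = W.rep) :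
      δ ≠ 0 := by
    rintro rfl
    exact W.rep_nonzero (by rw [← h, zero_smul])
  rw [Collin, Fintype.not_linearIndependent_iff]
  refine ⟨![α⁻¹, β⁻¹, γ⁻¹], ?_, 0, by simpa using hne hα⟩
  simp only [Fin.sum_univ_three, Matrix.cons_val_zero, Matrix.cons_val_one, Matrix.cons_val_two,
    Matrix.head_cons, Matrix.tail_cons, ← hα, ← hβ, ← hγ, smul_smul, inv_mul_cancel₀ (hne hα),
    inv_mul_cancel₀ (hne hβ), inv_mul_cancel₀ (hne hγ), one_smul, hsum]

theorem OnConic.polarBilin_rep_self {q : QuadraticForm ℝ (Fin 3 → ℝ)}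
    {X : Projectivization ℝ (Fin 3 → ℝ)} (hX : OnConic q X) :
    QuadraticMap.polarBilin q X.rep X.rep = 0 := by
  simp [QuadraticMap.polar_self, show q X.rep = 0 from hX]

theorem hessian_line_collinear
    (q : QuadraticForm ℝ (Fin 3 → ℝ))
    (hq : LinearMap.BilinForm.Nondegenerate (QuadraticMap.polarBilin q))
    (A B C : Projectivization ℝ (Fin 3 → ℝ))
    (hA : OnConic q A) (hB : OnConic q B) (hC : OnConic q C)
    (hABC : ¬ Collin A B C)
    (P Q' R : Projectivization ℝ (Fin 3 → ℝ))
    -- `P` is the intersection of the tangent line to the conic at `A` with the line `BC`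
    (hP : QuadraticMap.polarBilin q A.rep P.rep = 0 ∧ Collin B C P)
    -- `Q'` is the intersection of the tangent line to the conic at `B` with the line `CA`
    (hQ' : QuadraticMap.polarBilin q B.rep Q'.rep = 0 ∧ Collin C A Q')
    -- `R` is the intersection of the tangent line to the conic at `C` with the line `AB`
    (hR : QuadraticMap.polarBilin q C.rep R.rep = 0 ∧ Collin A B R) :
    Collin P Q' R := by
  have hsymm : BilinForm.IsSymm (QuadraticMap.polarBilin q) := ⟨QuadraticMap.polar_comm q⟩
  have hdim : finrank ℝ (Fin 3 → ℝ) = 3 := by simp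
  have hABC' : LinearIndependent ℝ ![A.rep, B.rep, C.rep] := not_not.mp hABC
  have hBCA := hABC'.rotate_three
  refine collin_of_add_add_eq_zero
    (BilinForm.exists_smul_eq_of_isotropic hq.1 hsymm hdim hABC'
      hA.polarBilin_rep_self hB.polarBilin_rep_self hP.1 hP.2)
    (BilinForm.exists_smul_eq_of_isotropic hq.1 hsymm hdim hBCA
      hB.polarBilin_rep_self hC.polarBilin_rep_self hQ'.1 hQ'.2)
    (BilinForm.exists_smul_eq_of_isotropic hq.1 hsymm hdim hBCA.rotate_three
      hC.polarBilin_rep_self hA.polarBilin_rep_self hR.1 hR.2) ?_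
  rw [hsymm.eq B.rep A.rep, hsymm.eq C.rep A.rep, hsymm.eq C.rep B.rep]
  module
end

section
/- For every real number t, define the points P = (−1 + 2(1−t²)/(1+t²), 4t/(1+t²)), Q = (−2(√3·t+1)/(t²+1), −(√3·t²+2t−√3)/(t²+1)), R = (2(√3·t−1)/(t²+1), (√3·t²−2t−√3)/(t²+1)) in ℝ², and let P' = −P, Q' = −Q, R' = −R. Then each of the eight points P, Q, R, P', Q', R', (1,0), (−1,0) satisfies the equation (3t²−1)x² + (2t³−6t)xy + (1−3t²)y² + (1−3t²) = 0, and this quadratic polynomial in x, y is nonzero (so its zero set is a conic 𝒦). -/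
open Complex

/-- Abbreviation for `√3`. -/
noncomputable def sqrt3 : ℝ := Real.sqrt 3

/-- `P = (−1 + 2(1−t²)/(1+t²), 4t/(1+t²))`, a point of the circle of center `(-1,0)`
and radius `2`. -/
noncomputable def Pt (t : ℝ) : ℂ :=
  ⟨-1 + 2 * (1 - t ^ 2) / (1 + t ^ 2), 4 * t / (1 + t ^ 2)⟩

/-- `Q = (−2(√3·t+1)/(t²+1), −(√3·t²+2t−√3)/(t²+1))`, obtained from `P` by a `120°`
rotation about `(-1,0)`. -/
noncomputable def Qt (t : ℝ) : ℂ :=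
  ⟨-2 * (sqrt3 * t + 1) / (t ^ 2 + 1), -(sqrt3 * t ^ 2 + 2 * t - sqrt3) / (t ^ 2 + 1)⟩

/-- `R = (2(√3·t−1)/(t²+1), (√3·t²−2t−√3)/(t²+1))`, obtained from `Q` by a `120°`
rotation about `(-1,0)`. -/
noncomputable def Rt (t : ℝ) : ℂ :=
  ⟨2 * (sqrt3 * t - 1) / (t ^ 2 + 1), (sqrt3 * t ^ 2 - 2 * t - sqrt3) / (t ^ 2 + 1)⟩

/-- The point `z` lies on the conic `𝒦 : (3t²−1)x² + (2t³−6t)xy + (1−3t²)y² + (1−3t²) = 0`. -/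
def OnK (t : ℝ) (z : ℂ) : Prop :=
  (3 * t ^ 2 - 1) * z.re ^ 2 + (2 * t ^ 3 - 6 * t) * z.re * z.im +
    (1 - 3 * t ^ 2) * z.im ^ 2 + (1 - 3 * t ^ 2) = 0

/-- First nonvanishing denominator factor `2t·y₀ − y₀² + 1`. -/
noncomputable def D₀ (t y : ℝ) : ℝ := 2 * t * y - y ^ 2 + 1

/-- Second nonvanishing denominator factor
`3t²y₀² + 2√3·t²y₀ − 3t² + 8t·y₀ − y₀² + 2√3·y₀ + 1`. -/
noncomputable def D₁ (t y : ℝ) : ℝ :=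
  3 * t ^ 2 * y ^ 2 + 2 * sqrt3 * t ^ 2 * y - 3 * t ^ 2 + 8 * t * y - y ^ 2 + 2 * sqrt3 * y + 1

/-- Third nonvanishing denominator factor
`3t²y₀² − 2√3·t²y₀ − 3t² + 8t·y₀ − y₀² − 2√3·y₀ + 1`. -/
noncomputable def D₂ (t y : ℝ) : ℝ :=
  3 * t ^ 2 * y ^ 2 - 2 * sqrt3 * t ^ 2 * y - 3 * t ^ 2 + 8 * t * y - y ^ 2 - 2 * sqrt3 * y + 1

/-- The point `P''` of the setup of Theorem 2. -/
noncomputable def Ppp (t y : ℝ) : ℂ :=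
  ⟨(3 * t ^ 2 - 1) * (y ^ 2 + 1) / ((t ^ 2 + 1) * D₀ t y),
   2 * (t ^ 2 * y + 2 * t - y) * (t * y - 1) / ((t ^ 2 + 1) * D₀ t y)⟩

/-- The point `Q''` of the setup of Theorem 2. -/
noncomputable def Qpp (t y : ℝ) : ℂ :=
  ⟨-2 * (3 * sqrt3 * t ^ 3 + 3 * t ^ 2 - sqrt3 * t - 1) * (y ^ 2 + 1) / (D₁ t y * (t ^ 2 + 1)),
   -(sqrt3 * t ^ 4 * y ^ 2 + 6 * t ^ 4 * y - 2 * t ^ 3 * y ^ 2 + 3 * sqrt3 * t ^ 4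
     - 8 * sqrt3 * t ^ 2 * y ^ 2 + 6 * t ^ 3 + 4 * t ^ 2 * y - 10 * t * y ^ 2
     - 4 * sqrt3 * t ^ 2 - sqrt3 * y ^ 2 - 2 * t - 2 * y + sqrt3) / (D₁ t y * (t ^ 2 + 1))⟩

/-- The point `R''` of the setup of Theorem 2. -/
noncomputable def Rpp (t y : ℝ) : ℂ :=
  ⟨2 * (3 * sqrt3 * t ^ 3 - 3 * t ^ 2 - sqrt3 * t + 1) * (y ^ 2 + 1) / (D₂ t y * (t ^ 2 + 1)),
   (sqrt3 * t ^ 4 * y ^ 2 - 6 * t ^ 4 * y + 2 * t ^ 3 * y ^ 2 + 3 * sqrt3 * t ^ 4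
     - 8 * sqrt3 * t ^ 2 * y ^ 2 - 6 * t ^ 3 - 4 * t ^ 2 * y + 10 * t * y ^ 2
     - 4 * sqrt3 * t ^ 2 - sqrt3 * y ^ 2 + 2 * t + 2 * y + sqrt3) / (D₂ t y * (t ^ 2 + 1))⟩

lemma onK_neg (t : ℝ) (z : ℂ) (h : OnK t z) : OnK t (-z) := by
  unfold OnK at *
  simp only [Complex.neg_re, Complex.neg_im]
  linarith [h]

lemma sqrt3_sq : sqrt3 ^ 2 = 3 := Real.sq_sqrt (by norm_num)

/-- The eight points `P, Q, R, P', Q', R', (1,0), (−1,0)` all lie on the conic `𝒦`, and the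
quadratic polynomial defining `𝒦` is nonzero. -/
theorem conic_through_eight_points (t : ℝ) :
    (OnK t (Pt t) ∧ OnK t (Qt t) ∧ OnK t (Rt t) ∧
      OnK t (-Pt t) ∧ OnK t (-Qt t) ∧ OnK t (-Rt t) ∧
      OnK t 1 ∧ OnK t (-1)) ∧
    (3 * t ^ 2 - 1, 2 * t ^ 3 - 6 * t, 1 - 3 * t ^ 2, (0 : ℝ), (0 : ℝ), 1 - 3 * t ^ 2) ≠
      ((0 : ℝ), (0 : ℝ), (0 : ℝ), (0 : ℝ), (0 : ℝ), (0 : ℝ)) := by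
  have ht : (1 : ℝ) + t ^ 2 ≠ 0 := by positivity
  have ht' : t ^ 2 + 1 ≠ 0 := by positivity
  have hs := sqrt3_sq
  have h3 : sqrt3 ^ 3 = 3 * sqrt3 := by rw [pow_succ, hs]
  have h4 : sqrt3 ^ 4 = 9 := by rw [show (4:ℕ) = 2*2 by rfl, pow_mul, hs]; norm_num
  have hP : OnK t (Pt t) := by
    unfold OnK Pt; simp only; field_simp; ring
  have hQ : OnK t (Qt t) := by
    unfold OnK Qt; simp only; field_simp
    ring_nf
    simp only [h4, h3, hs]
    all_goals ring
  have hR : OnK t (Rt t) := by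
    unfold OnK Rt; simp only; field_simp
    ring_nf
    simp only [h4, h3, hs]
    all_goals ring
  refine ⟨⟨hP, hQ, hR, onK_neg t _ hP, onK_neg t _ hQ, onK_neg t _ hR, ?_, ?_⟩, ?_⟩
  · unfold OnK; simp
  · unfold OnK; simp
  · intro h
    simp only [Prod.mk.injEq] at h
    obtain ⟨h1, h2, -⟩ := h
    have ht2 : t ^ 2 = 1 / 3 := by linarith
    have htne : t = 0 := by nlinarith [sq_nonneg t, sq_nonneg (t - 1), sq_nonneg (t + 1)]
    rw [htne] at ht2; norm_num at ht2
end

section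
/- Fix real numbers t and y₀ satisfying the nonvanishing conditions of the setup and additionally 3y₀ − √3 ≠ 0. With P, Q, R and P'', Q'', R'' defined by the explicit formulas of the setup, the three lines PQ'', QR'', RP'' are concurrent: they all pass through the point (0, −(√3·y₀ + 3)/(3y₀ − √3)). -/
open Complex

/-! The concurrency is a direct computation: each collinearity is the vanishing of a `2 × 2`
determinant, which after clearing the denominators `t² + 1`, `D₀`, `D₁`, `D₂` and `3y₀ − √3`
becomes a polynomial identity in `t`, `y₀` and `√3`, valid modulo `√3² = 3`. -/

theorem collinear_of_cross_eq_zero {a b c : ℂ}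
    (h : (b.re - a.re) * (c.im - a.im) - (c.re - a.re) * (b.im - a.im) = 0) :
    Collinear ℝ ({a, b, c} : Set ℂ) := by
  by_cases hab : b = a
  · subst hab
    simpa using collinear_pair ℝ b c
  have hba : b - a ≠ 0 := sub_ne_zero.mpr hab
  have hreal : (((c - a) / (b - a)).re : ℂ) = (c - a) / (b - a) := by
    refine Complex.ext rfl ?_
    rw [Complex.ofReal_im, Complex.div_im, ← sub_div, eq_comm, div_eq_zero_iff]
    left
    simp only [Complex.sub_re, Complex.sub_im]
    linear_combination h
  rw [collinear_iff_of_mem (Set.mem_insert a _)]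
  refine ⟨b - a, ?_⟩
  rintro p (rfl | rfl | rfl)
  · exact ⟨0, by simp⟩
  · exact ⟨1, by simp⟩
  · refine ⟨((p - a) / (b - a)).re, ?_⟩
    rw [vadd_eq_add, Complex.real_smul, hreal, div_mul_cancel₀ _ hba, sub_add_cancel]

noncomputable def perspector (y : ℝ) : ℂ := ⟨0, -(sqrt3 * y + 3) / (3 * y - sqrt3)⟩

section

variable {t y : ℝ}

lemma collinear_Pt_Qpp_perspector (h₁ : D₁ t y ≠ 0) (h₃ : 3 * y - sqrt3 ≠ 0) :
    Collinear ℝ ({Pt t, Qpp t y, perspector y} : Set ℂ) := by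
  apply collinear_of_cross_eq_zero
  simp only [Pt, Qpp, perspector]
  field_simp
  unfold D₁
  grind [sqrt3_sq]

lemma collinear_Qt_Rpp_perspector (h₂ : D₂ t y ≠ 0) (h₃ : 3 * y - sqrt3 ≠ 0) :
    Collinear ℝ ({Qt t, Rpp t y, perspector y} : Set ℂ) := by
  apply collinear_of_cross_eq_zero
  simp only [Qt, Rpp, perspector]
  field_simp
  unfold D₂
  grind [sqrt3_sq]

lemma collinear_Rt_Ppp_perspector (h₀ : D₀ t y ≠ 0) (h₃ : 3 * y - sqrt3 ≠ 0) :
    Collinear ℝ ({Rt t, Ppp t y, perspector y} : Set ℂ) := by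
  apply collinear_of_cross_eq_zero
  simp only [Rt, Ppp, perspector]
  field_simp
  unfold D₀
  grind [sqrt3_sq]

end

/-- The three lines `PQ''`, `QR''`, `RP''` are concurrent at `(0, −(√3·y₀+3)/(3y₀−√3))`. -/
theorem second_perspector (t y₀ : ℝ)
    (h₀ : D₀ t y₀ ≠ 0) (h₁ : D₁ t y₀ ≠ 0) (h₂ : D₂ t y₀ ≠ 0)
    (h₃ : 3 * y₀ - sqrt3 ≠ 0) :
    Collinear ℝ ({Pt t, Qpp t y₀, (⟨0, -(sqrt3 * y₀ + 3) / (3 * y₀ - sqrt3)⟩ : ℂ)} : Set ℂ) ∧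
    Collinear ℝ ({Qt t, Rpp t y₀, (⟨0, -(sqrt3 * y₀ + 3) / (3 * y₀ - sqrt3)⟩ : ℂ)} : Set ℂ) ∧
    Collinear ℝ ({Rt t, Ppp t y₀, (⟨0, -(sqrt3 * y₀ + 3) / (3 * y₀ - sqrt3)⟩ : ℂ)} : Set ℂ) :=
  ⟨collinear_Pt_Qpp_perspector h₁ h₃, collinear_Qt_Rpp_perspector h₂ h₃,
    collinear_Rt_Ppp_perspector h₀ h₃⟩
end

section
/- Let 𝒞 be a conic in the real projective plane, given as the zero locus of a nondegenerate quadratic form on ℝ³. Let ABC and A'B'C' be two triangles inscribed in 𝒞 (each triple noncollinear, the six points pairwise distinct) such that ABC is perspective with A'B'C' with perspector P (lines AA', BB', CC' pass through P) and ABC is perspective with B'C'A' with perspector Q (lines AB', BC', CA' pass through Q), with P ≠ Q. Let A''B''C'' be a further triangle inscribed in 𝒞 (noncollinear, its vertices distinct from A, B, C) such that ABC is perspective with A''B''C'' with perspector S (lines AA'', BB'', CC'' pass through S) for some point S on the line PQ. Then there exist points T and U on the line PQ such that ABC is perspective with B''C''A'' with perspector T (lines AB'', BC'', CA'' pass through T)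 and ABC is perspective with C''A''B'' with perspector U (lines AC'', BA'', CB'' pass through U). -/
/-!
A point `P` off the conic induces the involution of the conic that swaps the two ends of every
chord through `P`; it is the action of the reflection in `P`. Two inscribed triangles are
perspective from `P` exactly when this involution maps one onto the other. Reflections in three
vectors of a plane compose to the reflection in a vector `t` of that plane, so
`σ_S ∘ σ_P ∘ σ_Q = σ_T` with `T` on `PQ`; following the vertices,
`ABC ↦ B'C'A' ↦ BCA ↦ B''C''A''`, so `T` is a perspector of `ABC` and `B''C''A''`.
The same argument applied to `σ_T ∘ σ_P ∘ σ_Q` gives `U`.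
-/

open Module Submodule

namespace QuadraticMap

section CommRing

variable {R V : Type*} [CommRing R] [AddCommGroup V] [Module R V] (Q : QuadraticForm R V)

/-- `Q p` times the reflection in `p`; unlike the reflection it is defined for isotropic `p`
too, and it is polynomial in `p`. -/
def harmonicHomology (p : V) : V →ₗ[R] V :=
  Q p • LinearMap.id - (polarBilin Q p).smulRight p

theorem harmonicHomology_apply (p x : V) :
    harmonicHomology Q p x = Q p • x - polar Q p x • p := rfl

theorem map_smul_add_smul (a b : R) (u v : V) :
    Q (a • u + b • v) = a * a * Q u + b * b * Q v + a * b * polar Q u v := by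
  rw [QuadraticMap.map_add (⇑Q), QuadraticMap.map_smul, QuadraticMap.map_smul, polar_smul_left,
    polar_smul_right]
  simp only [smul_eq_mul]
  ring

theorem harmonicHomology_comp_comp (a b : R) (u v : V) :
    harmonicHomology Q (a • u + b • v) ∘ₗ harmonicHomology Q u ∘ₗ harmonicHomology Q v =
      harmonicHomology Q ((b * Q v) • u - (a * Q u + b * polar Q u v) • v) := by
  ext x
  rw [sub_eq_add_neg, ← neg_smul]
  simp only [LinearMap.comp_apply, harmonicHomology_apply, map_smul_add_smul]
  simp only [polar_add_left, polar_smul_left, polar_smul_right, polar_sub_right, polar_self,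
    polar_comm Q v u, smul_eq_mul, nsmul_eq_mul]
  module

theorem exists_harmonicHomology_comp_comp_eq {s u v : V} (hs : s ∈ span R {u, v}) :
    ∃ t ∈ span R {u, v},
      harmonicHomology Q s ∘ₗ harmonicHomology Q u ∘ₗ harmonicHomology Q v =
        harmonicHomology Q t := by
  obtain ⟨a, b, rfl⟩ := mem_span_pair.mp hs
  refine ⟨_, sub_mem (smul_mem _ _ (subset_span (by simp)))
    (smul_mem _ _ (subset_span (by simp))), harmonicHomology_comp_comp Q a b u v⟩

theorem harmonicHomology_smul_add_smul_apply {x y : V} (hx : Q x = 0) (hy : Q y = 0) (a b : R) :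
    harmonicHomology Q (a • x + b • y) x = (-(b * b * polar Q x y)) • y := by
  rw [harmonicHomology_apply, map_smul_add_smul, hx, hy, polar_add_left, polar_smul_left,
    polar_smul_left, polar_self, hx, polar_comm Q y x]
  simp only [smul_zero, smul_eq_mul]
  module

end CommRing

section Field

variable {K V : Type*} [Field K] [AddCommGroup V] [Module K V] (Q : QuadraticForm K V)

theorem mem_span_pair_of_harmonicHomology_apply {t x y : V} {c : K}
    (hxy : LinearIndependent K ![x, y]) (hc : c ≠ 0) (h : harmonicHomology Q t x = c • y) :
    t ∈ span K {x, y} := by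
  rw [harmonicHomology_apply] at h
  by_cases htx : polar Q t x = 0
  · rw [htx, zero_smul, sub_zero] at h
    have hsum : Q t • x + (-c) • y = 0 := by rw [h, neg_smul, add_neg_cancel]
    exact absurd (LinearIndependent.pair_iff.mp hxy _ _ hsum).2 (neg_ne_zero.mpr hc)
  · rw [mem_span_pair]
    refine ⟨(polar Q t x)⁻¹ * Q t, -(polar Q t x)⁻¹ * c, ?_⟩
    rw [mul_smul, neg_mul, neg_smul, mul_smul, ← smul_neg, ← smul_add, ← sub_eq_add_neg, ← h,
      sub_sub_cancel, smul_smul, inv_mul_cancel₀ htx, one_smul]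

/-- In dimension at most three a nondegenerate form has no totally isotropic plane. -/
theorem polar_ne_zero_of_isotropic [FiniteDimensional K V]
    (hQ : LinearMap.BilinForm.Nondegenerate (polarBilin Q)) (hV : finrank K V ≤ 3) {x y : V}
    (hx : Q x = 0) (hy : Q y = 0) (hxy : LinearIndependent K ![x, y]) : polar Q x y ≠ 0 := by
  intro hxy0
  have hW : span K (Set.range ![x, y]) ≤
      LinearMap.BilinForm.orthogonal (polarBilin Q) (span K (Set.range ![x, y])) := by
    rw [span_le]
    rintro _ ⟨i, rfl⟩ w hw
    rw [Matrix.range_cons_cons_empty, mem_span_pair] at hw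
    obtain ⟨a, b, rfl⟩ := hw
    fin_cases i <;> simp [polar_self, hx, hy, hxy0, polar_comm Q y x]
  have hdim := finrank_mono hW
  rw [LinearMap.BilinForm.finrank_orthogonal hQ, finrank_span_eq_card hxy, Fintype.card_fin] at hdim
  omega

end Field

end QuadraticMap

open QuadraticMap Projectivization
open scoped LinearAlgebra.Projectivization

section Projective

variable {K V : Type*} [Field K] [AddCommGroup V] [Module K V]

def PointMapsTo (f : V →ₗ[K] V) (X Y : ℙ K V) : Prop :=
  ∃ c : K, c ≠ 0 ∧ f X.rep = c • Y.rep

theorem PointMapsTo.comp {f g : V →ₗ[K] V} {X Y Z : ℙ K V} (hf : PointMapsTo f X Y)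
    (hg : PointMapsTo g Y Z) : PointMapsTo (g ∘ₗ f) X Z := by
  obtain ⟨c, hc, hfX⟩ := hf
  obtain ⟨d, hd, hgY⟩ := hg
  exact ⟨c * d, mul_ne_zero hc hd, by rw [LinearMap.comp_apply, hfX, map_smul, hgY, smul_smul]⟩

def TriangleMapsTo (f : V →ₗ[K] V) (X₁ X₂ X₃ Y₁ Y₂ Y₃ : ℙ K V) : Prop :=
  PointMapsTo f X₁ Y₁ ∧ PointMapsTo f X₂ Y₂ ∧ PointMapsTo f X₃ Y₃

theorem TriangleMapsTo.comp {f g : V →ₗ[K] V} {X₁ X₂ X₃ Y₁ Y₂ Y₃ Z₁ Z₂ Z₃ : ℙ K V}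
    (hf : TriangleMapsTo f X₁ X₂ X₃ Y₁ Y₂ Y₃) (hg : TriangleMapsTo g Y₁ Y₂ Y₃ Z₁ Z₂ Z₃) :
    TriangleMapsTo (g ∘ₗ f) X₁ X₂ X₃ Z₁ Z₂ Z₃ :=
  ⟨hf.1.comp hg.1, hf.2.1.comp hg.2.1, hf.2.2.comp hg.2.2⟩

theorem TriangleMapsTo.rotate {f : V →ₗ[K] V} {X₁ X₂ X₃ Y₁ Y₂ Y₃ : ℙ K V}
    (h : TriangleMapsTo f X₁ X₂ X₃ Y₁ Y₂ Y₃) : TriangleMapsTo f X₂ X₃ X₁ Y₂ Y₃ Y₁ :=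
  ⟨h.2.1, h.2.2, h.1⟩

theorem linearIndependent_rep_pair {X Y : ℙ K V} (hXY : X ≠ Y) :
    LinearIndependent K ![X.rep, Y.rep] := by
  convert independent_iff.mp ((independent_pair_iff_ne X Y).mpr hXY) using 1
  ext i; fin_cases i <;> rfl

theorem eq_of_rep_eq_smul {X Y : ℙ K V} {c : K} (h : X.rep = c • Y.rep) : X = Y := by
  rw [← mk_rep X, ← mk_rep Y, mk_eq_mk_iff']
  exact ⟨c, h.symm⟩

end Projective

section Conic

variable {q : QuadraticForm ℝ (Fin 3 → ℝ)} {X Y Z : ℙ ℝ (Fin 3 → ℝ)}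

theorem collin_self_left : Collin X X Z :=
  fun h => absurd (h.injective rfl : (0 : Fin 3) = 1) (by decide)

theorem collin_iff : Collin X Y Z ↔
    (LinearIndependent ℝ ![X.rep, Y.rep] → Z.rep ∈ span ℝ {X.rep, Y.rep}) := by
  have hinit : Fin.init ![X.rep, Y.rep, Z.rep] = ![X.rep, Y.rep] := by
    ext i; fin_cases i <;> rfl
  rw [Collin, linearIndependent_finSucc', hinit, Matrix.range_cons_cons_empty, not_and_not_right]
  rfl

theorem Collin.swap (h : Collin X Y Z) : Collin Y X Z := fun hli => h <| by
  convert hli.comp (Equiv.swap (0 : Fin 3) 1) (Equiv.injective _) using 1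
  ext i; fin_cases i <;> rfl

theorem Collin.rep_mem_span (h : Collin X Y Z) (hXY : X ≠ Y) :
    Z.rep ∈ span ℝ {X.rep, Y.rep} :=
  collin_iff.mp h (linearIndependent_rep_pair hXY)

theorem collin_mk_of_mem_span {v : Fin 3 → ℝ} (hv : v ≠ 0) (h : v ∈ span ℝ {X.rep, Y.rep}) :
    Collin X Y (mk ℝ v hv) := by
  obtain ⟨c, hc⟩ := exists_smul_eq_mk_rep ℝ v hv
  exact collin_iff.mpr fun _ => hc ▸ smul_mem _ _ h

theorem eq_or_eq_of_collin (hq : LinearMap.BilinForm.Nondegenerate (polarBilin q))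
    (hX : OnConic q X) (hY : OnConic q Y) (hZ : OnConic q Z) (hXY : X ≠ Y) (h : Collin X Y Z) :
    Z = X ∨ Z = Y := by
  obtain ⟨a, b, hab⟩ := mem_span_pair.mp (h.rep_mem_span hXY)
  have hpolar : polar q X.rep Y.rep ≠ 0 :=
    polar_ne_zero_of_isotropic q hq (by simp) hX hY (linearIndependent_rep_pair hXY)
  have hab0 : a * b * polar q X.rep Y.rep = 0 := by
    rw [OnConic, ← hab, map_smul_add_smul, hX, hY] at hZ
    linear_combination hZ
  rcases mul_eq_zero.mp ((mul_eq_zero.mp hab0).resolve_right hpolar) with rfl | rfl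
  · exact .inr (eq_of_rep_eq_smul (c := b) (by simpa using hab.symm))
  · exact .inl (eq_of_rep_eq_smul (c := a) (by simpa using hab.symm))

theorem not_onConic_of_collin_of_collin (hq : LinearMap.BilinForm.Nondegenerate (polarBilin q))
    {P X₁ Y₁ X₂ Y₂ : ℙ ℝ (Fin 3 → ℝ)} (hX₁ : OnConic q X₁) (hY₁ : OnConic q Y₁)
    (hX₂ : OnConic q X₂) (hY₂ : OnConic q Y₂) (h₁ : X₁ ≠ Y₁) (h₂ : X₂ ≠ Y₂)
    (hXX : X₁ ≠ X₂) (hXY : X₁ ≠ Y₂) (hYX : Y₁ ≠ X₂) (hYY : Y₁ ≠ Y₂)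
    (hP₁ : Collin X₁ Y₁ P) (hP₂ : Collin X₂ Y₂ P) : ¬ OnConic q P := by
  intro hP
  rcases eq_or_eq_of_collin hq hX₁ hY₁ hP h₁ hP₁ with rfl | rfl <;>
    rcases eq_or_eq_of_collin hq hX₂ hY₂ hP h₂ hP₂ with h | h <;> simp_all

theorem pointMapsTo_harmonicHomology_of_collin {P : ℙ ℝ (Fin 3 → ℝ)} (hX : OnConic q X)
    (hY : OnConic q Y) (hP : ¬ OnConic q P) (hXY : X ≠ Y) (h : Collin X Y P) :
    PointMapsTo (harmonicHomology q P.rep) X Y := by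
  obtain ⟨a, b, hab⟩ := mem_span_pair.mp (h.rep_mem_span hXY)
  have hPab : q P.rep = a * b * polar q X.rep Y.rep := by
    rw [← hab, map_smul_add_smul, hX, hY]
    ring
  rw [OnConic, hPab] at hP
  have hb := right_ne_zero_of_mul (left_ne_zero_of_mul hP)
  refine ⟨_, neg_ne_zero.mpr (mul_ne_zero (mul_ne_zero hb hb) (right_ne_zero_of_mul hP)), ?_⟩
  rw [← hab, harmonicHomology_smul_add_smul_apply q hX hY]

theorem triangleMapsTo_of_perspector {P X₁ X₂ X₃ Y₁ Y₂ Y₃ : ℙ ℝ (Fin 3 → ℝ)}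
    (hX₁ : OnConic q X₁) (hX₂ : OnConic q X₂) (hX₃ : OnConic q X₃)
    (hY₁ : OnConic q Y₁) (hY₂ : OnConic q Y₂) (hY₃ : OnConic q Y₃) (hP : ¬ OnConic q P)
    (h₁ : X₁ ≠ Y₁) (h₂ : X₂ ≠ Y₂) (h₃ : X₃ ≠ Y₃)
    (hcol : Collin X₁ Y₁ P ∧ Collin X₂ Y₂ P ∧ Collin X₃ Y₃ P) :
    TriangleMapsTo (harmonicHomology q P.rep) X₁ X₂ X₃ Y₁ Y₂ Y₃ ∧
      TriangleMapsTo (harmonicHomology q P.rep) Y₁ Y₂ Y₃ X₁ X₂ X₃ :=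
  ⟨⟨pointMapsTo_harmonicHomology_of_collin hX₁ hY₁ hP h₁ hcol.1,
      pointMapsTo_harmonicHomology_of_collin hX₂ hY₂ hP h₂ hcol.2.1,
      pointMapsTo_harmonicHomology_of_collin hX₃ hY₃ hP h₃ hcol.2.2⟩,
    ⟨pointMapsTo_harmonicHomology_of_collin hY₁ hX₁ hP h₁.symm hcol.1.swap,
      pointMapsTo_harmonicHomology_of_collin hY₂ hX₂ hP h₂.symm hcol.2.1.swap,
      pointMapsTo_harmonicHomology_of_collin hY₃ hX₃ hP h₃.symm hcol.2.2.swap⟩⟩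

theorem exists_perspector_of_triangleMapsTo {P Q X₁ X₂ X₃ Y₁ Y₂ Y₃ : ℙ ℝ (Fin 3 → ℝ)}
    {t : Fin 3 → ℝ} (ht : t ∈ span ℝ {P.rep, Q.rep})
    (h : TriangleMapsTo (harmonicHomology q t) X₁ X₂ X₃ Y₁ Y₂ Y₃)
    (h₁ : X₁ ≠ Y₁) (h₂ : X₂ ≠ Y₂) (h₃ : X₃ ≠ Y₃) :
    ∃ T, Collin P Q T ∧ Collin X₁ Y₁ T ∧ Collin X₂ Y₂ T ∧ Collin X₃ Y₃ T := by
  have ht₀ : t ≠ 0 := by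
    rintro rfl
    obtain ⟨c, hc, h₀⟩ := h.1
    rw [harmonicHomology_apply, QuadraticMap.map_zero, zero_smul, smul_zero, sub_zero] at h₀
    exact smul_ne_zero hc Y₁.rep_nonzero h₀.symm
  have hcol {X Y : ℙ ℝ (Fin 3 → ℝ)} (hXY : X ≠ Y)
      (hmaps : PointMapsTo (harmonicHomology q t) X Y) : Collin X Y (mk ℝ t ht₀) :=
    have ⟨_, hc, hXc⟩ := hmaps
    collin_mk_of_mem_span ht₀ <|
      mem_span_pair_of_harmonicHomology_apply q (linearIndependent_rep_pair hXY) hc hXc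
  exact ⟨mk ℝ t ht₀, collin_mk_of_mem_span ht₀ ht, hcol h₁ h.1, hcol h₂ h.2.1, hcol h₃ h.2.2⟩

end Conic

theorem perspector_on_line_implies_triply_perspective_general
    (q : QuadraticForm ℝ (Fin 3 → ℝ))
    (hq : LinearMap.BilinForm.Nondegenerate (QuadraticMap.polarBilin q))
    (A B C A' B' C' : Projectivization ℝ (Fin 3 → ℝ))
    (hA : OnConic q A) (hB : OnConic q B) (hC : OnConic q C)
    (hA' : OnConic q A') (hB' : OnConic q B') (hC' : OnConic q C')
    (hdistinct : List.Pairwise (· ≠ ·) [A, B, C, A', B', C'])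
    (P Q : Projectivization ℝ (Fin 3 → ℝ)) (hPQ : P ≠ Q)
    (hP : Collin A A' P ∧ Collin B B' P ∧ Collin C C' P)
    (hQ : Collin A B' Q ∧ Collin B C' Q ∧ Collin C A' Q)
    (A'' B'' C'' : Projectivization ℝ (Fin 3 → ℝ))
    (hA'' : OnConic q A'') (hB'' : OnConic q B'') (hC'' : OnConic q C'')
    (hA''B''C'' : ¬ Collin A'' B'' C'')
    (hdistinct' : A'' ≠ A ∧ A'' ≠ B ∧ A'' ≠ C ∧ B'' ≠ A ∧ B'' ≠ B ∧ B'' ≠ C ∧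
      C'' ≠ A ∧ C'' ≠ B ∧ C'' ≠ C)
    (S : Projectivization ℝ (Fin 3 → ℝ)) (hSline : Collin P Q S)
    (hS : Collin A A'' S ∧ Collin B B'' S ∧ Collin C C'' S) :
    (∃ T : Projectivization ℝ (Fin 3 → ℝ), Collin P Q T ∧
      Collin A B'' T ∧ Collin B C'' T ∧ Collin C A'' T) ∧
    (∃ U : Projectivization ℝ (Fin 3 → ℝ), Collin P Q U ∧
      Collin A C'' U ∧ Collin B A'' U ∧ Collin C B'' U) := by
  simp only [List.pairwise_cons, List.mem_cons, List.not_mem_nil, forall_eq_or_imp,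
    List.Pairwise.nil, and_true] at hdistinct
  obtain ⟨⟨hAB, -, hAA', hAB', hAC', -⟩, ⟨-, hBA', hBB', hBC', -⟩, ⟨hCA', -, hCC', -⟩,
    ⟨hA'B', -⟩, ⟨hB'C', -⟩, -⟩ := hdistinct
  obtain ⟨hA''A, hA''B, hA''C, hB''A, hB''B, hB''C, hC''A, hC''B, hC''C⟩ := hdistinct'
  have hA''B'' : A'' ≠ B'' := by
    rintro rfl
    exact hA''B''C'' collin_self_left
  have hPq := not_onConic_of_collin_of_collin hq hA hA' hB hB' hAA' hBB' hAB hAB' hBA'.symm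
    hA'B' hP.1 hP.2.1
  have hQq := not_onConic_of_collin_of_collin hq hA hB' hB hC' hAB' hBC' hAB hAC' hBB'.symm
    hB'C' hQ.1 hQ.2.1
  have hSq := not_onConic_of_collin_of_collin hq hA hA'' hB hB'' hA''A.symm hB''B.symm hAB
    hB''A.symm hA''B hA''B'' hS.1 hS.2.1
  have hPmaps := (triangleMapsTo_of_perspector hA hB hC hA' hB' hC' hPq hAA' hBB' hCC' hP).2
  have hQmaps := (triangleMapsTo_of_perspector hA hB hC hB' hC' hA' hQq hAB' hBC' hCA' hQ).1
  have hSmaps := (triangleMapsTo_of_perspector hA hB hC hA'' hB'' hC'' hSq hA''A.symm hB''B.symm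
    hC''C.symm hS).1
  obtain ⟨t, htPQ, ht⟩ := exists_harmonicHomology_comp_comp_eq q (hSline.rep_mem_span hPQ)
  obtain ⟨u, huPQ, hu⟩ := exists_harmonicHomology_comp_comp_eq q htPQ
  have hT : TriangleMapsTo (harmonicHomology q t) A B C B'' C'' A'' :=
    ht ▸ (hQmaps.comp hPmaps.rotate).comp hSmaps.rotate
  have hU : TriangleMapsTo (harmonicHomology q u) A B C C'' A'' B'' :=
    hu ▸ (hQmaps.comp hPmaps.rotate).comp hT.rotate
  exact ⟨exists_perspector_of_triangleMapsTo htPQ hT hB''A.symm hC''B.symm hA''C.symm,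
    exists_perspector_of_triangleMapsTo huPQ hU hC''A.symm hA''B.symm hB''C.symm⟩

theorem perspector_on_line_implies_triply_perspective
    (q : QuadraticForm ℝ (Fin 3 → ℝ))
    (hq : LinearMap.BilinForm.Nondegenerate (QuadraticMap.polarBilin q))
    (A B C A' B' C' : Projectivization ℝ (Fin 3 → ℝ))
    (hA : OnConic q A) (hB : OnConic q B) (hC : OnConic q C)
    (hA' : OnConic q A') (hB' : OnConic q B') (hC' : OnConic q C')
    (hABC : ¬ Collin A B C) (hA'B'C' : ¬ Collin A' B' C')
    (hdistinct : List.Pairwise (· ≠ ·) [A, B, C, A', B', C'])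
    (P Q : Projectivization ℝ (Fin 3 → ℝ)) (hPQ : P ≠ Q)
    (hP : Collin A A' P ∧ Collin B B' P ∧ Collin C C' P)
    (hQ : Collin A B' Q ∧ Collin B C' Q ∧ Collin C A' Q)
    (A'' B'' C'' : Projectivization ℝ (Fin 3 → ℝ))
    (hA'' : OnConic q A'') (hB'' : OnConic q B'') (hC'' : OnConic q C'')
    (hA''B''C'' : ¬ Collin A'' B'' C'')
    (hdistinct' : A'' ≠ A ∧ A'' ≠ B ∧ A'' ≠ C ∧ B'' ≠ A ∧ B'' ≠ B ∧ B'' ≠ C ∧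
      C'' ≠ A ∧ C'' ≠ B ∧ C'' ≠ C)
    (S : Projectivization ℝ (Fin 3 → ℝ)) (hSline : Collin P Q S)
    (hS : Collin A A'' S ∧ Collin B B'' S ∧ Collin C C'' S) :
    (∃ T : Projectivization ℝ (Fin 3 → ℝ), Collin P Q T ∧
      Collin A B'' T ∧ Collin B C'' T ∧ Collin C A'' T) ∧
    (∃ U : Projectivization ℝ (Fin 3 → ℝ), Collin P Q U ∧
      Collin A C'' U ∧ Collin B A'' U ∧ Collin C B'' U) :=
  perspector_on_line_implies_triply_perspective_general q hq A B C A' B' C' hA hB hC hA' hB' hC'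
    hdistinct P Q hPQ hP hQ A'' B'' C'' hA'' hB'' hC'' hA''B''C'' hdistinct' S hSline hS
end
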